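/- (Lemma, integrated closeness of log-densities.) Let ρ(x) = e^{−U(x)}/C and ρ̃(x) = e^{−Ũ(x)}/C̃ be probability densities on ℝ^d with normalizing constants C, C̃ > 0, where U and Ũ are differentiable, both satisfy the (m,b)-dissipativity condition, their gradients ∇U and ∇Ũ are L-Lipschitz, and sup_{x ∈ ℝ^d} ‖∇Ũ(x) − ∇U(x)‖ ≤ ε with ε ∈ (0,1]. Let ρ̂ be any probability density on ℝ^d of the form ρ̂ = e^{−Û}/Ĉ with Û differentiable and satisfying the (m,b)-dissipativity condition. Then there exists a constant C₁ > 0, depending only on m, b, L, d (but not on ε), such that ∫_{ℝ^d} |log ρ(x) − log ρ̃(x)| ρ̂(x) dx ≤ C₁·ε. -/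

import Mathlib

open MeasureTheory Real RealInnerProductSpace

/-- Euclidean space `ℝ^d`. -/
abbrev Euc (d : ℕ) := EuclideanSpace ℝ (Fin d)

/-!
Gradient closeness gives `|(Ũ - U)(x) - (Ũ - U)(0)| ≤ ε ‖x‖`, so `log ρ - log ρ̃` stays within
`ε ‖x‖` of its value at the origin, which is a difference of log-normalizers. Comparing the
normalizers through `e^{ε t} ≤ 1 + ε t e^t` bounds that value, in both directions, by `ε` times an
exponential moment of `ρ` or `ρ̃`. All the moments needed are controlled by dissipativity alone:
along rays it gives `V x ≥ V (x / 2) + 3 m ‖x‖² / 8 - b log 2`, and the substitution `x ↦ x / 2`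
turns the Gaussian factor into a constant depending only on `m`, `b` and `d`.
-/

open Module

section Pointwise

variable {E : Type*} [NormedAddCommGroup E] [InnerProductSpace ℝ E] [CompleteSpace E]

def Dissipative (m b : ℝ) (V : E → ℝ) : Prop :=
  ∀ x, ⟪x, gradient V x⟫ ≥ m * ‖x‖ ^ 2 - b

theorem hasDerivAt_comp_smul {V : E → ℝ} (hV : Differentiable ℝ V) (y : E) (r : ℝ) :
    HasDerivAt (fun t : ℝ => V (t • y)) ⟪y, gradient V (r • y)⟫ r := by
  have hline : HasDerivAt (fun t : ℝ => t • y) y r := by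
    simpa using (hasDerivAt_id r).smul_const y
  have := (hV (r • y)).hasGradientAt.hasFDerivAt.comp_hasDerivAt r hline
  rwa [InnerProductSpace.toDual_apply_apply, real_inner_comm] at this

/-- `r ↦ V (r • y) - m ‖y‖² r² / 2 + b log r` is nondecreasing on `[1, ∞)`, since dissipativity
makes its derivative nonnegative. -/
theorem Dissipative.add_le_comp_smul {m b : ℝ} {V : E → ℝ} (hdis : Dissipative m b V)
    (hV : Differentiable ℝ V) (y : E) {c : ℝ} (hc : 1 ≤ c) :
    V y + m * ‖y‖ ^ 2 * (c ^ 2 - 1) / 2 - b * log c ≤ V (c • y) := by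
  set F : ℝ → ℝ := fun r => V (r • y) - m * ‖y‖ ^ 2 * r ^ 2 / 2 + b * log r
  have hF : ∀ r : ℝ, 0 < r →
      HasDerivAt F (⟪y, gradient V (r • y)⟫ - m * ‖y‖ ^ 2 * r + b * r⁻¹) r := fun r hr =>
    ((hasDerivAt_comp_smul hV y r).sub
      ((((hasDerivAt_pow 2 r).const_mul (m * ‖y‖ ^ 2)).div_const 2).congr_deriv (by ring))).add
      ((hasDerivAt_log hr.ne').const_mul b)
  have hF' : ∀ r ∈ interior (Set.Ici (1 : ℝ)),
      0 ≤ ⟪y, gradient V (r • y)⟫ - m * ‖y‖ ^ 2 * r + b * r⁻¹ := by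
    rw [interior_Ici]
    intro r (hr : 1 < r)
    have hr0 : 0 < r := one_pos.trans hr
    have h := hdis (r • y)
    rw [real_inner_smul_left, norm_smul, norm_of_nonneg hr0.le] at h
    refine nonneg_of_mul_nonneg_right ?_ hr0
    have : r * (⟪y, gradient V (r • y)⟫ - m * ‖y‖ ^ 2 * r + b * r⁻¹) =
        r * ⟪y, gradient V (r • y)⟫ - m * (r * ‖y‖) ^ 2 + b := by
      field_simp
    linarith
  have hmono : MonotoneOn F (Set.Ici 1) :=
    monotoneOn_of_hasDerivWithinAt_nonneg (convex_Ici 1)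
      (fun r hr => (hF r (one_pos.trans_le hr)).continuousAt.continuousWithinAt)
      (fun r hr => (hF r (one_pos.trans_le (interior_subset hr))).hasDerivWithinAt) hF'
  have := hmono (Set.mem_Ici.2 le_rfl) hc hc
  simp only [F, one_smul, one_pow, log_one, mul_zero, add_zero] at this
  linarith

theorem Dissipative.exp_neg_le_exp_neg_half_smul {m b : ℝ} {V : E → ℝ} (hdis : Dissipative m b V)
    (hV : Differentiable ℝ V) (x : E) :
    exp (-V x) ≤ 2 ^ b * exp (-(3 * m / 8 * ‖x‖ ^ 2)) * exp (-V ((2 : ℝ)⁻¹ • x)) := by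
  have h := hdis.add_le_comp_smul hV ((2 : ℝ)⁻¹ • x) one_le_two
  rw [smul_inv_smul₀ two_ne_zero, norm_smul, norm_inv, Real.norm_two] at h
  rw [rpow_def_of_pos two_pos, ← exp_add, ← exp_add]
  gcongr
  linarith

theorem abs_sub_sub_sub_le_of_norm_gradient_sub_le {V W : E → ℝ} (hV : Differentiable ℝ V)
    (hW : Differentiable ℝ W) {ε : ℝ} (h : ∀ x, ‖gradient W x - gradient V x‖ ≤ ε) (x y : E) :
    |(W x - V x) - (W y - V y)| ≤ ε * ‖x - y‖ := by
  have hbound : ∀ z ∈ Set.univ, ‖fderiv ℝ (fun w => W w - V w) z‖ ≤ ε := fun z _ => by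
    rw [fderiv_fun_sub (hW z) (hV z), ← toDual_gradient, ← toDual_gradient, ← map_sub,
      LinearIsometryEquiv.norm_map]
    exact h z
  exact convex_univ.norm_image_sub_le_of_norm_fderiv_le (fun z _ => (hW z).sub (hV z)) hbound
    (Set.mem_univ y) (Set.mem_univ x)

end Pointwise

theorem mul_exp_mul_exp_neg_mul_sq_le {a : ℝ} (ha : 0 < a) (t : ℝ) :
    t * exp t * exp (-(a * t ^ 2)) ≤ exp a⁻¹ := by
  have h1 : t * exp t ≤ exp (2 * t) := by
    rw [two_mul, exp_add]
    exact mul_le_mul_of_nonneg_right ((le_add_of_nonneg_right zero_le_one).trans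
      (add_one_le_exp t)) (exp_pos t).le
  have h2 : 2 * t - a * t ^ 2 ≤ a⁻¹ := by
    have : a⁻¹ - (2 * t - a * t ^ 2) = (a * t - 1) ^ 2 / a := by field_simp; ring
    linarith [div_nonneg (sq_nonneg (a * t - 1)) ha.le]
  calc t * exp t * exp (-(a * t ^ 2)) ≤ exp (2 * t) * exp (-(a * t ^ 2)) := by gcongr
    _ = exp (2 * t - a * t ^ 2) := by rw [← exp_add]; ring_nf
    _ ≤ exp a⁻¹ := exp_le_exp.2 h2

theorem exp_mul_le_one_add_mul_mul_exp {ε t : ℝ} (hε : 0 ≤ ε) (hε1 : ε ≤ 1) (ht : 0 ≤ t) :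
    exp (ε * t) ≤ 1 + ε * t * exp t := by
  have h1 : exp (ε * t) * (1 - ε * t) ≤ 1 := by
    calc exp (ε * t) * (1 - ε * t) ≤ exp (ε * t) * exp (-(ε * t)) := by
          gcongr; linarith [add_one_le_exp (-(ε * t))]
      _ = 1 := by rw [← exp_add, add_neg_cancel, exp_zero]
  have h2 : exp (ε * t) ≤ exp t := exp_le_exp.2 (mul_le_of_le_one_left ht hε1)
  nlinarith [mul_nonneg hε ht]

theorem integrable_and_integral_eq_of_integral_div_eq_one {α : Type*} [MeasurableSpace α]
    {μ : Measure α} {f : α → ℝ} {c : ℝ} (hc : c ≠ 0) (h : ∫ x, f x / c ∂μ = 1) :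
    Integrable f μ ∧ ∫ x, f x ∂μ = c := by
  rw [integral_div, div_eq_one_iff_eq hc] at h
  exact ⟨Integrable.of_integral_ne_zero (h ▸ hc), h⟩

/-- `2 ^ b` comes from the ray bound at scale `2`, `exp (8 / (3 m))` bounds
`t e^t e^{-3 m t² / 8}`, and `2 ^ n` is the Jacobian of `x ↦ x / 2` in dimension `n`. -/
noncomputable def expMomentBound (m b : ℝ) (n : ℕ) : ℝ := 2 ^ b * exp (8 / (3 * m)) * 2 ^ n

theorem expMomentBound_pos (m b : ℝ) (n : ℕ) : 0 < expMomentBound m b n := by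
  unfold expMomentBound; positivity

section Integral

variable {E : Type*} [NormedAddCommGroup E] [InnerProductSpace ℝ E] [FiniteDimensional ℝ E]
  [MeasurableSpace E] [BorelSpace E] {μ : Measure E} [μ.IsAddHaarMeasure]
  {m b : ℝ} {V : E → ℝ}

theorem Dissipative.integral_mul_exp_neg_le (hdis : Dissipative m b V) (hV : Differentiable ℝ V)
    (hI : Integrable (fun x => exp (-V x)) μ) {g : E → ℝ} {K : ℝ} (hg : AEStronglyMeasurable g μ)
    (hg0 : ∀ x, 0 ≤ g x) (hgK : ∀ x, g x * exp (-(3 * m / 8 * ‖x‖ ^ 2)) ≤ K) :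
    Integrable (fun x => g x * exp (-V x)) μ ∧
      ∫ x, g x * exp (-V x) ∂μ ≤ 2 ^ b * K * 2 ^ finrank ℝ E * ∫ x, exp (-V x) ∂μ := by
  have hpt : ∀ x, g x * exp (-V x) ≤ 2 ^ b * K * exp (-V ((2 : ℝ)⁻¹ • x)) := fun x =>
    calc g x * exp (-V x)
        ≤ g x * (2 ^ b * exp (-(3 * m / 8 * ‖x‖ ^ 2)) * exp (-V ((2 : ℝ)⁻¹ • x))) :=
          mul_le_mul_of_nonneg_left (hdis.exp_neg_le_exp_neg_half_smul hV x) (hg0 x)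
      _ = 2 ^ b * (g x * exp (-(3 * m / 8 * ‖x‖ ^ 2))) * exp (-V ((2 : ℝ)⁻¹ • x)) := by ring
      _ ≤ 2 ^ b * K * exp (-V ((2 : ℝ)⁻¹ • x)) := by gcongr; exact hgK x
  have hIhalf : Integrable (fun x => 2 ^ b * K * exp (-V ((2 : ℝ)⁻¹ • x))) μ :=
    ((integrable_comp_smul_iff μ (fun x => exp (-V x)) (inv_ne_zero two_ne_zero)).2 hI).const_mul _
  have hVc := hV.continuous
  have hIg : Integrable (fun x => g x * exp (-V x)) μ :=
    hIhalf.mono' (hg.mul (by fun_prop : Continuous fun x => exp (-V x)).aestronglyMeasurable)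
      (.of_forall fun x => by
        rw [norm_of_nonneg (mul_nonneg (hg0 x) (exp_pos _).le)]; exact hpt x)
  refine ⟨hIg, (integral_mono hIg hIhalf hpt).trans_eq ?_⟩
  rw [integral_const_mul, Measure.integral_comp_smul μ (fun x => exp (-V x)), inv_pow, inv_inv,
    abs_of_pos (by positivity), smul_eq_mul]
  ring

theorem Dissipative.integral_exp_moment_le (hm : 0 < m) (hdis : Dissipative m b V)
    (hV : Differentiable ℝ V) (hI : Integrable (fun x => exp (-V x)) μ) :
    Integrable (fun x => ‖x‖ * exp ‖x‖ * exp (-V x)) μ ∧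
      ∫ x, ‖x‖ * exp ‖x‖ * exp (-V x) ∂μ ≤
        expMomentBound m b (finrank ℝ E) * ∫ x, exp (-V x) ∂μ := by
  have hK (x : E) : ‖x‖ * exp ‖x‖ * exp (-(3 * m / 8 * ‖x‖ ^ 2)) ≤ exp (8 / (3 * m)) := by
    simpa only [inv_div] using mul_exp_mul_exp_neg_mul_sq_le (by positivity : 0 < 3 * m / 8) ‖x‖
  exact hdis.integral_mul_exp_neg_le hV hI (by fun_prop)
    (fun x => mul_nonneg (norm_nonneg x) (exp_pos _).le) hK

theorem Dissipative.integral_norm_mul_exp_neg_le (hm : 0 < m) (hdis : Dissipative m b V)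
    (hV : Differentiable ℝ V) (hI : Integrable (fun x => exp (-V x)) μ) :
    Integrable (fun x => ‖x‖ * exp (-V x)) μ ∧
      ∫ x, ‖x‖ * exp (-V x) ∂μ ≤ expMomentBound m b (finrank ℝ E) * ∫ x, exp (-V x) ∂μ := by
  have hK (x : E) : ‖x‖ * exp (-(3 * m / 8 * ‖x‖ ^ 2)) ≤ exp (8 / (3 * m)) := by
    calc ‖x‖ * exp (-(3 * m / 8 * ‖x‖ ^ 2))
        ≤ ‖x‖ * exp ‖x‖ * exp (-(3 * m / 8 * ‖x‖ ^ 2)) := by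
          gcongr; exact le_mul_of_one_le_right (norm_nonneg x) (one_le_exp (norm_nonneg x))
      _ ≤ exp (8 / (3 * m)) := by
          simpa only [inv_div] using
            mul_exp_mul_exp_neg_mul_sq_le (by positivity : 0 < 3 * m / 8) ‖x‖
  exact hdis.integral_mul_exp_neg_le hV hI (by fun_prop) (fun x => norm_nonneg x) hK

/-- `∫ e^{-W} ≤ e^{-(W - V)(0)} ∫ e^{ε ‖x‖} e^{-V}`, and `e^{ε t} ≤ 1 + ε t e^t` reduces the
right-hand side to an exponential moment of `e^{-V}`. -/
theorem Dissipative.log_integral_exp_neg_sub_le (hm : 0 < m) (hdis : Dissipative m b V)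
    (hV : Differentiable ℝ V) (hIV : Integrable (fun x => exp (-V x)) μ) {W : E → ℝ}
    (hIW : Integrable (fun x => exp (-W x)) μ) {ε : ℝ} (hε0 : 0 ≤ ε) (hε1 : ε ≤ 1)
    (hclose : ∀ x, |(W x - V x) - (W 0 - V 0)| ≤ ε * ‖x‖) :
    (W 0 - V 0) + log (∫ x, exp (-W x) ∂μ) - log (∫ x, exp (-V x) ∂μ) ≤
      ε * expMomentBound m b (finrank ℝ E) := by
  set δ := W 0 - V 0
  set A := expMomentBound m b (finrank ℝ E)
  set Z := ∫ x, exp (-V x) ∂μ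
  obtain ⟨hIP, hP⟩ := hdis.integral_exp_moment_le hm hV hIV
  have hpt : ∀ x, exp (-W x) ≤ exp (-δ) * (exp (-V x) + ε * (‖x‖ * exp ‖x‖ * exp (-V x))) := by
    intro x
    calc exp (-W x) ≤ exp (-δ + ε * ‖x‖ + -V x) :=
          exp_le_exp.2 (by linarith [(abs_le.1 (hclose x)).1])
      _ = exp (-δ) * exp (ε * ‖x‖) * exp (-V x) := by rw [exp_add, exp_add]
      _ ≤ exp (-δ) * (1 + ε * ‖x‖ * exp ‖x‖) * exp (-V x) := by
          gcongr; exact exp_mul_le_one_add_mul_mul_exp hε0 hε1 (norm_nonneg x)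
      _ = _ := by ring
  have hIR : Integrable
      (fun x => exp (-δ) * (exp (-V x) + ε * (‖x‖ * exp ‖x‖ * exp (-V x)))) μ :=
    (hIV.add (hIP.const_mul ε)).const_mul _
  have hZW : ∫ x, exp (-W x) ∂μ ≤ exp (-δ) * ((1 + ε * A) * Z) := by
    refine (integral_mono hIW hIR hpt).trans ?_
    rw [integral_const_mul, integral_add hIV (hIP.const_mul ε), integral_const_mul]
    gcongr
    nlinarith
  have hZ : 0 < Z := integral_exp_pos hIV
  have hA : 0 < A := expMomentBound_pos m b _
  have := log_le_log (integral_exp_pos hIW) hZW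
  rw [log_mul (exp_pos _).ne' (mul_pos (by positivity) hZ).ne', log_mul (by positivity) hZ.ne',
    log_exp] at this
  linarith [log_le_sub_one_of_pos (show 0 < 1 + ε * A by positivity)]

theorem Dissipative.abs_log_density_sub_le (hm : 0 < m) (hdisV : Dissipative m b V)
    (hV : Differentiable ℝ V) (hIV : Integrable (fun x => exp (-V x)) μ) {W : E → ℝ}
    (hdisW : Dissipative m b W) (hW : Differentiable ℝ W)
    (hIW : Integrable (fun x => exp (-W x)) μ) {ε : ℝ} (hε0 : 0 ≤ ε) (hε1 : ε ≤ 1)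
    (hclose : ∀ x, ‖gradient W x - gradient V x‖ ≤ ε) (x : E) :
    |log (exp (-V x) / ∫ x, exp (-V x) ∂μ) - log (exp (-W x) / ∫ x, exp (-W x) ∂μ)| ≤
      ε * (‖x‖ + expMomentBound m b (finrank ℝ E)) := by
  have hWV := abs_sub_sub_sub_le_of_norm_gradient_sub_le hV hW hclose
  have hVW := abs_sub_sub_sub_le_of_norm_gradient_sub_le hW hV
    fun x => (norm_sub_rev _ _).trans_le (hclose x)
  have hupper := hdisV.log_integral_exp_neg_sub_le (μ := μ) hm hV hIV hIW hε0 hε1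
    fun x => by simpa using hWV x 0
  have hlower := hdisW.log_integral_exp_neg_sub_le (μ := μ) hm hW hIW hIV hε0 hε1
    fun x => by simpa using hVW x 0
  have hx := hWV x 0
  rw [sub_zero, abs_le] at hx
  rw [log_div (exp_pos _).ne' (integral_exp_pos hIV).ne',
    log_div (exp_pos _).ne' (integral_exp_pos hIW).ne', log_exp, log_exp]
  rw [abs_le]
  constructor <;> linarith

theorem Dissipative.integral_abs_mul_density_le (hm : 0 < m) (hdis : Dissipative m b V)
    (hV : Differentiable ℝ V) (hI : Integrable (fun x => exp (-V x)) μ) {f : E → ℝ} {ε : ℝ}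
    (hε : 0 ≤ ε) (hf : ∀ x, |f x| ≤ ε * (‖x‖ + expMomentBound m b (finrank ℝ E))) :
    ∫ x, |f x| * (exp (-V x) / ∫ x, exp (-V x) ∂μ) ∂μ ≤
      2 * expMomentBound m b (finrank ℝ E) * ε := by
  set A := expMomentBound m b (finrank ℝ E)
  set Z := ∫ x, exp (-V x) ∂μ
  have hZ : 0 < Z := integral_exp_pos hI
  obtain ⟨hIP, hP⟩ := hdis.integral_norm_mul_exp_neg_le hm hV hI
  have hρ : Integrable (fun x => exp (-V x) / Z) μ := hI.div_const Z
  have hPρ : Integrable (fun x => ‖x‖ * (exp (-V x) / Z)) μ := by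
    simpa only [mul_div_assoc] using hIP.div_const Z
  have hmoment : ∫ x, ‖x‖ * (exp (-V x) / Z) ∂μ ≤ A := by
    simp_rw [← mul_div_assoc]
    rw [integral_div]
    exact div_le_of_le_mul₀ hZ.le (expMomentBound_pos m b _).le hP
  have hmass : ∫ x, exp (-V x) / Z ∂μ = 1 := by rw [integral_div, div_self hZ.ne']
  calc _ ≤ ∫ x, ε * (‖x‖ * (exp (-V x) / Z)) + ε * A * (exp (-V x) / Z) ∂μ :=
        integral_mono_of_nonneg (.of_forall fun x => by positivity)
          ((hPρ.const_mul ε).add (hρ.const_mul _)) (.of_forall fun x => by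
            have := mul_le_mul_of_nonneg_right (hf x) (by positivity : 0 ≤ exp (-V x) / Z)
            linarith)
    _ = ε * (∫ x, ‖x‖ * (exp (-V x) / Z) ∂μ) + ε * A * ∫ x, exp (-V x) / Z ∂μ := by
        rw [integral_add (hPρ.const_mul ε) (hρ.const_mul _), integral_const_mul,
          integral_const_mul]
    _ ≤ ε * A + ε * A * 1 := by rw [hmass]; gcongr
    _ = 2 * A * ε := by ring

end Integral

theorem log_density_integrated_closeness_general
    (d : ℕ) (m b L : ℝ) (hm : 0 < m) :
    ∃ C₁ : ℝ, 0 < C₁ ∧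
      ∀ (ε : ℝ), 0 < ε → ε ≤ 1 →
      ∀ (U Ut Uh : Euc d → ℝ) (Cn Ctn Chn : ℝ), 0 < Cn → 0 < Ctn → 0 < Chn →
      Differentiable ℝ U → Differentiable ℝ Ut → Differentiable ℝ Uh →
      -- `ρ = e^{-U}/C`, `ρ̃ = e^{-Ũ}/C̃` and `ρ̂ = e^{-Û}/Ĉ` are probability densities
      ((∫ x, Real.exp (-(U x)) / Cn) = 1) →
      ((∫ x, Real.exp (-(Ut x)) / Ctn) = 1) →
      ((∫ x, Real.exp (-(Uh x)) / Chn) = 1) →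
      -- `(m,b)`-dissipativity of `U`, `Ũ` and `Û`
      (∀ x, ⟪x, gradient U x⟫ ≥ m * ‖x‖ ^ 2 - b) →
      (∀ x, ⟪x, gradient Ut x⟫ ≥ m * ‖x‖ ^ 2 - b) →
      (∀ x, ⟪x, gradient Uh x⟫ ≥ m * ‖x‖ ^ 2 - b) →
      -- `L`-Lipschitz gradients of `U` and `Ũ`
      LipschitzWith (Real.toNNReal L) (fun x => gradient U x) →
      LipschitzWith (Real.toNNReal L) (fun x => gradient Ut x) →
      -- `ε`-closeness of the gradients
      (∀ x, ‖gradient Ut x - gradient U x‖ ≤ ε) →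
      (∫ x, |Real.log (Real.exp (-(U x)) / Cn) - Real.log (Real.exp (-(Ut x)) / Ctn)| *
        (Real.exp (-(Uh x)) / Chn)) ≤ C₁ * ε := by
  refine ⟨2 * expMomentBound m b (finrank ℝ (Euc d)),
    mul_pos two_pos (expMomentBound_pos m b _), ?_⟩
  intro ε hε hε1 U Ut Uh Cn Ctn Chn hCn hCtn hChn hU hUt hUh hnU hnUt hnUh hdU hdUt hdUh _ _ hclose
  obtain ⟨hIU, rfl⟩ := integrable_and_integral_eq_of_integral_div_eq_one hCn.ne' hnU
  obtain ⟨hIUt, rfl⟩ := integrable_and_integral_eq_of_integral_div_eq_one hCtn.ne' hnUt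
  obtain ⟨hIUh, rfl⟩ := integrable_and_integral_eq_of_integral_div_eq_one hChn.ne' hnUh
  exact Dissipative.integral_abs_mul_density_le hm hdUh hUh hIUh hε.le
    (Dissipative.abs_log_density_sub_le hm hdU hU hIU hdUt hUt hIUt hε.le hε1 hclose)

/-- Lemma: integrated closeness of log-densities against any dissipative density `ρ̂`.
The constant `C₁` depends only on `m, b, L, d`, not on `ε`. -/
theorem log_density_integrated_closeness
    (d : ℕ) (hd : 1 ≤ d) (m b L : ℝ) (hm : 0 < m) (hb : 0 ≤ b) (hL : 0 ≤ L) :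
    ∃ C₁ : ℝ, 0 < C₁ ∧
      ∀ (ε : ℝ), 0 < ε → ε ≤ 1 →
      ∀ (U Ut Uh : Euc d → ℝ) (Cn Ctn Chn : ℝ), 0 < Cn → 0 < Ctn → 0 < Chn →
      Differentiable ℝ U → Differentiable ℝ Ut → Differentiable ℝ Uh →
      -- `ρ = e^{-U}/C`, `ρ̃ = e^{-Ũ}/C̃` and `ρ̂ = e^{-Û}/Ĉ` are probability densities
      ((∫ x, Real.exp (-(U x)) / Cn) = 1) →
      ((∫ x, Real.exp (-(Ut x)) / Ctn) = 1) →
      ((∫ x, Real.exp (-(Uh x)) / Chn) = 1) →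
      -- `(m,b)`-dissipativity of `U`, `Ũ` and `Û`
      (∀ x, ⟪x, gradient U x⟫ ≥ m * ‖x‖ ^ 2 - b) →
      (∀ x, ⟪x, gradient Ut x⟫ ≥ m * ‖x‖ ^ 2 - b) →
      (∀ x, ⟪x, gradient Uh x⟫ ≥ m * ‖x‖ ^ 2 - b) →
      -- `L`-Lipschitz gradients of `U` and `Ũ`
      LipschitzWith (Real.toNNReal L) (fun x => gradient U x) →
      LipschitzWith (Real.toNNReal L) (fun x => gradient Ut x) →
      -- `ε`-closeness of the gradients
      (∀ x, ‖gradient Ut x - gradient U x‖ ≤ ε) →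
      (∫ x, |Real.log (Real.exp (-(U x)) / Cn) - Real.log (Real.exp (-(Ut x)) / Ctn)| *
        (Real.exp (-(Uh x)) / Chn)) ≤ C₁ * ε :=
  log_density_integrated_closeness_general d m b L hm
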